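/- arXiv:1302.3092 — 4 statements merged into one kernel-verified Lean document; each statement's English description precedes it below -/
import Mathlib

section
/- If f is strongly convex with parameter σ₁ with respect to the norm ‖·‖₁ and has coordinate-wise Lipschitz gradient with constants L_i (so that f(u+Eⁱh_i) ≤ f(u) + ⟨∇_i f(u), h_i⟩ + (L_i/2)‖h_i‖² holds), then σ₁ ≤ 1. -/
open scoped RealInnerProductSpace

noncomputable abbrev FullSpace (M : ℕ) (n : Fin M → ℕ) :=
  PiLp 2 (fun i : Fin M => EuclideanSpace ℝ (Fin (n i)))

noncomputable def blockEmb {M : ℕ} {n : Fin M → ℕ} (i : Fin M)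
    (h : EuclideanSpace ℝ (Fin (n i))) : FullSpace M n :=
  (WithLp.equiv 2 _).symm (Pi.single i h)

noncomputable def norm1Sq {M : ℕ} {n : Fin M → ℕ} (L : Fin M → ℝ)
    (u : FullSpace M n) : ℝ := ∑ i, L i * ‖u i‖ ^ 2

/-!
Test both inequalities on one step `u ↦ u + Eⁱh` along a single block: strong convexity
bounds `f (u + Eⁱh)` below by `f u + ⟨∇ᵢf(u), h⟩ + (σ₁/2) Lᵢ‖h‖²`, and the block descent
bound bounds it above by the same expression with `σ₁` replaced by `1`.
Any `h ≠ 0` then gives `σ₁ ≤ 1`.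
-/

namespace FullSpace

variable {M : ℕ} {n : Fin M → ℕ}

theorem blockEmb_apply (i : Fin M) (h : EuclideanSpace ℝ (Fin (n i))) (j : Fin M) :
    (blockEmb i h : FullSpace M n) j =
      Pi.single (M := fun j => EuclideanSpace ℝ (Fin (n j))) i h j :=
  rfl

theorem inner_blockEmb (x : FullSpace M n) (i : Fin M) (h : EuclideanSpace ℝ (Fin (n i))) :
    ⟪x, blockEmb i h⟫ = ⟪x i, h⟫ := by
  rw [PiLp.inner_apply, Fintype.sum_eq_single i fun j hj => by
    rw [blockEmb_apply, Pi.single_eq_of_ne hj, inner_zero_right]]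
  rw [blockEmb_apply, Pi.single_eq_same]

theorem norm1Sq_blockEmb (L : Fin M → ℝ) (i : Fin M) (h : EuclideanSpace ℝ (Fin (n i))) :
    norm1Sq L (blockEmb i h) = L i * ‖h‖ ^ 2 := by
  rw [norm1Sq, Fintype.sum_eq_single i fun j hj => by
    rw [blockEmb_apply, Pi.single_eq_of_ne hj, norm_zero]; ring]
  rw [blockEmb_apply, Pi.single_eq_same]

theorem mul_le_of_strongConvex_of_blockDescent {f : FullSpace M n → ℝ} {L : Fin M → ℝ}
    {σ₁ : ℝ}
    (hsc : ∀ w v : FullSpace M n,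
      f w ≥ f v + ⟪gradient f v, w - v⟫ + σ₁ / 2 * norm1Sq L (w - v))
    (hdesc : ∀ (i : Fin M) (u : FullSpace M n) (h : EuclideanSpace ℝ (Fin (n i))),
      f (u + blockEmb i h) ≤ f u + ⟪gradient f u i, h⟫ + L i / 2 * ‖h‖ ^ 2)
    (i : Fin M) (u : FullSpace M n) (h : EuclideanSpace ℝ (Fin (n i))) :
    σ₁ * (L i * ‖h‖ ^ 2) ≤ L i * ‖h‖ ^ 2 := by
  have lower := hsc (u + blockEmb i h) u
  rw [add_sub_cancel_left, inner_blockEmb, norm1Sq_blockEmb] at lower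
  linarith [hdesc i u h]

end FullSpace

theorem sigma_one_le_one_general {M : ℕ} {n : Fin M → ℕ}
    (f : FullSpace M n → ℝ)
    (L : Fin M → ℝ) (hL : ∀ i, 0 < L i)
    (σ₁ : ℝ)
    (hsc : ∀ w v : FullSpace M n,
      f w ≥ f v + ⟪gradient f v, w - v⟫ + σ₁ / 2 * norm1Sq L (w - v))
    (hdesc : ∀ (i : Fin M) (u : FullSpace M n) (h : EuclideanSpace ℝ (Fin (n i))),
      f (u + blockEmb i h) ≤ f u + ⟪gradient f u i, h⟫ + L i / 2 * ‖h‖ ^ 2)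
    (hnontriv : ∃ i : Fin M, 0 < n i) :
    σ₁ ≤ 1 := by
  obtain ⟨i, hi⟩ := hnontriv
  let h : EuclideanSpace ℝ (Fin (n i)) := EuclideanSpace.single ⟨0, hi⟩ 1
  have h_ne : h ≠ 0 := by simp [h]
  have hpos : 0 < L i * ‖h‖ ^ 2 := by have := hL i; positivity
  have key := FullSpace.mul_le_of_strongConvex_of_blockDescent hsc hdesc i 0 h
  exact le_of_mul_le_mul_right (by rwa [one_mul]) hpos

/-- strong convexity w.r.t. `‖·‖₁` together with the block descent upper
bound forces `σ₁ ≤ 1` (assuming some block direction is nontrivial). -/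
theorem sigma_one_le_one {M : ℕ} {n : Fin M → ℕ}
    (f : FullSpace M n → ℝ) (hf : Differentiable ℝ f)
    (L : Fin M → ℝ) (hL : ∀ i, 0 < L i)
    (σ₁ : ℝ)
    (hsc : ∀ w v : FullSpace M n,
      f w ≥ f v + ⟪gradient f v, w - v⟫ + σ₁ / 2 * norm1Sq L (w - v))
    (hdesc : ∀ (i : Fin M) (u : FullSpace M n) (h : EuclideanSpace ℝ (Fin (n i))),
      f (u + blockEmb i h) ≤ f u + ⟪gradient f u i, h⟫ + L i / 2 * ‖h‖ ^ 2)
    (hnontriv : ∃ i : Fin M, 0 < n i) :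
    σ₁ ≤ 1 :=
  sigma_one_le_one_general f L hL σ₁ hsc hdesc hnontriv
end

section
/- Under the block-wise descent lemma f(u + Eⁱh_i) ≤ f(u) + ⟨∇_i f(u), h_i⟩ + (L_i/2)‖h_i‖², the constrained block update ūⁱ(u) = u + Eⁱ(v̄ⁱ(u) − uⁱ) satisfies the sufficient decrease property f(u) − f(ūⁱ(u)) ≥ (L_i/2)‖v̄ⁱ(u) − uⁱ‖². -/
open scoped RealInnerProductSpace

/-!
The first-order optimality condition of the proximal subproblem at `v̄`, tested in the feasible
direction `u - v̄` (feasible since both points lie in the convex set `U`), gives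
`⟪g, v̄ - u⟫ ≤ -L ‖v̄ - u‖²`. Plugging this into the descent lemma at `h = v̄ - u` turns
`f u + ⟪g, h⟫ + L/2 ‖h‖²` into `f u - L/2 ‖h‖²`.
-/

section ProximalStep

variable {E : Type*} [NormedAddCommGroup E] [InnerProductSpace ℝ E]

theorem hasFDerivAt_inner_sub_add_mul_norm_sub_sq (g a x : E) (L : ℝ) :
    HasFDerivAt (fun v => ⟪g, v - a⟫ + L / 2 * ‖v - a‖ ^ 2)
      (innerSL ℝ (g + L • (x - a))) x := by
  have hsub : HasFDerivAt (fun v : E => v - a) (ContinuousLinearMap.id ℝ E) x :=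
    (hasFDerivAt_id x).sub_const a
  refine (((innerSL ℝ g).hasFDerivAt.comp x hsub).add
    (hsub.norm_sq.const_mul (L / 2))).congr_fderiv ?_
  ext y
  simp
  ring

theorem inner_le_neg_mul_norm_sq_of_isMinOn {s : Set E} (hs : Convex ℝ s) {g a x : E} {L : ℝ}
    (ha : a ∈ s) (hx : x ∈ s)
    (hmin : IsMinOn (fun v => ⟪g, v - a⟫ + L / 2 * ‖v - a‖ ^ 2) s x) :
    ⟪g, x - a⟫ ≤ -L * ‖x - a‖ ^ 2 := by
  have hdir : a - x ∈ posTangentConeAt s x :=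
    mem_posTangentConeAt_of_segment_subset (by simpa using hs.segment_subset hx ha)
  have hopt := hmin.localize.hasFDerivWithinAt_nonneg
    (hasFDerivAt_inner_sub_add_mul_norm_sub_sq g a x L).hasFDerivWithinAt hdir
  have hneg : a - x = -(x - a) := (neg_sub x a).symm
  simp only [innerSL_apply_apply, hneg, inner_neg_right, inner_add_left, real_inner_smul_left,
    real_inner_self_eq_norm_sq] at hopt
  linarith

end ProximalStep

theorem block_update_sufficient_decrease_general {M : ℕ} {n : Fin M → ℕ}
    (f : FullSpace M n → ℝ)
    (L : Fin M → ℝ)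
    (hdesc : ∀ (i : Fin M) (u : FullSpace M n) (h : EuclideanSpace ℝ (Fin (n i))),
      f (u + blockEmb i h) ≤ f u + ⟪gradient f u i, h⟫ + L i / 2 * ‖h‖ ^ 2)
    (U : (i : Fin M) → Set (EuclideanSpace ℝ (Fin (n i))))
    (hUconvex : ∀ i, Convex ℝ (U i))
    (u : FullSpace M n) (i : Fin M) (hui : u i ∈ U i)
    (vbar : EuclideanSpace ℝ (Fin (n i))) (hvbarU : vbar ∈ U i)
    (hmin : ∀ v ∈ U i,
      ⟪gradient f u i, vbar - u i⟫ + L i / 2 * ‖vbar - u i‖ ^ 2 ≤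
        ⟪gradient f u i, v - u i⟫ + L i / 2 * ‖v - u i‖ ^ 2) :
    f u - f (u + blockEmb i (vbar - u i)) ≥ L i / 2 * ‖vbar - u i‖ ^ 2 := by
  have hopt := inner_le_neg_mul_norm_sq_of_isMinOn (hUconvex i) hui hvbarU (isMinOn_iff.mpr hmin)
  linarith [hdesc i u (vbar - u i)]

/-- sufficient decrease of the constrained block update. -/
theorem block_update_sufficient_decrease {M : ℕ} {n : Fin M → ℕ}
    (f : FullSpace M n → ℝ) (hf : Differentiable ℝ f)
    (L : Fin M → ℝ) (hL : ∀ i, 0 < L i)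
    (hdesc : ∀ (i : Fin M) (u : FullSpace M n) (h : EuclideanSpace ℝ (Fin (n i))),
      f (u + blockEmb i h) ≤ f u + ⟪gradient f u i, h⟫ + L i / 2 * ‖h‖ ^ 2)
    (U : (i : Fin M) → Set (EuclideanSpace ℝ (Fin (n i))))
    (hUclosed : ∀ i, IsClosed (U i)) (hUconvex : ∀ i, Convex ℝ (U i))
    (u : FullSpace M n) (i : Fin M) (hui : u i ∈ U i)
    (vbar : EuclideanSpace ℝ (Fin (n i))) (hvbarU : vbar ∈ U i)
    (hmin : ∀ v ∈ U i,
      ⟪gradient f u i, vbar - u i⟫ + L i / 2 * ‖vbar - u i‖ ^ 2 ≤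
        ⟪gradient f u i, v - u i⟫ + L i / 2 * ‖v - u i‖ ^ 2) :
    f u - f (u + blockEmb i (vbar - u i)) ≥ L i / 2 * ‖vbar - u i‖ ^ 2 :=
  block_update_sufficient_decrease_general f L hdesc U hUconvex u i hui vbar hvbarU hmin
end

section
/- For a convex function f with coordinate-wise Lipschitz gradient, the PCDM iterate u_{k+1} = Σᵢ (1/M) ūⁱ(u_k), where each ūⁱ(u_k) = u_k + Eⁱ(v̄ⁱ(u_k) − uⁱ_k), satisfies f(u_{k+1}) ≤ f(u_k) − (1/M) Σᵢ (L_i/2)‖v̄ⁱ(u_k) − uⁱ_k‖²; in particular f(u_{k+1}) ≤ f(u_k). -/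
open scoped RealInnerProductSpace

/-!
Each block step `ūⁱ = u + Eⁱ(v̄ⁱ - uⁱ)` is a sufficient-decrease step: since `v̄ⁱ` minimises the
block model `⟪∇ᵢf(u), v - uⁱ⟫ + Lᵢ/2 ‖v - uⁱ‖²` over the convex set `Uⁱ`, comparing it with the
points of the segment towards `uⁱ` gives `⟪∇ᵢf(u), v̄ⁱ - uⁱ⟫ ≤ -Lᵢ‖v̄ⁱ - uⁱ‖²`, and the block descent
inequality then yields `f(ūⁱ) ≤ f(u) - Lᵢ/2 ‖v̄ⁱ - uⁱ‖²`. The PCDM iterate is the uniform average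
of the `ūⁱ`, so Jensen's inequality averages these decreases.
-/

open Filter Topology in
theorem nonpos_of_forall_le_mul {a b : ℝ} (h : ∀ t ∈ Set.Ioc (0 : ℝ) 1, a ≤ b * t) : a ≤ 0 := by
  have hlim : Tendsto (fun t => b * t) (𝓝[>] 0) (𝓝 0) := by
    simpa using ((continuous_const_mul b).tendsto 0).mono_left nhdsWithin_le_nhds
  exact ge_of_tendsto hlim (eventually_of_mem (Ioc_mem_nhdsGT one_pos) h)

theorem inner_add_mul_norm_sq_nonpos_of_isMinOn {E : Type*} [NormedAddCommGroup E]
    [InnerProductSpace ℝ E] {U : Set E} (hU : Convex ℝ U) {g x v : E} {L : ℝ}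
    (hx : x ∈ U) (hv : v ∈ U)
    (hmin : IsMinOn (fun w => ⟪g, w - x⟫ + L / 2 * ‖w - x‖ ^ 2) U v) :
    ⟪g, v - x⟫ + L * ‖v - x‖ ^ 2 ≤ 0 := by
  refine nonpos_of_forall_le_mul (b := L / 2 * ‖v - x‖ ^ 2) fun t ⟨ht0, ht1⟩ => ?_
  -- Moving from `v` a fraction `t` towards `x` changes the model by
  -- `-t (⟪g, v - x⟫ + L ‖v - x‖²) + t² L/2 ‖v - x‖²`, which minimality makes nonnegative.
  have hmem : (1 - t) • v + t • x ∈ U := hU hv hx (by linarith) ht0.le (by ring)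
  have hw := isMinOn_iff.mp hmin _ hmem
  have hsub : (1 - t) • v + t • x - x = (1 - t) • (v - x) := by module
  simp only [hsub, real_inner_smul_right, norm_smul, mul_pow, Real.norm_eq_abs, sq_abs] at hw
  refine le_of_mul_le_mul_left ?_ ht0
  nlinarith

theorem sum_blockEmb {M : ℕ} {n : Fin M → ℕ} (h : (i : Fin M) → EuclideanSpace ℝ (Fin (n i))) :
    ∑ i, blockEmb i (h i) = WithLp.toLp 2 h := by
  simp only [blockEmb, WithLp.equiv_symm_apply, ← WithLp.toLp_sum, Finset.univ_sum_single]

theorem ConvexOn.map_average_le_sub {E ι : Type*} [AddCommGroup E] [Module ℝ E] [Fintype ι]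
    [Nonempty ι] {f : E → ℝ} (hf : ConvexOn ℝ Set.univ f) {p : ι → E} {u : E} {δ : ι → ℝ}
    (h : ∀ i, f (p i) ≤ f u - δ i) :
    f (∑ i, (1 / (Fintype.card ι : ℝ)) • p i) ≤ f u - 1 / (Fintype.card ι : ℝ) * ∑ i, δ i := by
  have hcard : (0 : ℝ) < Fintype.card ι := by exact_mod_cast Fintype.card_pos
  calc f (∑ i, (1 / (Fintype.card ι : ℝ)) • p i)
      ≤ ∑ i, 1 / (Fintype.card ι : ℝ) * f (p i) :=
        hf.map_sum_le (fun _ _ => by positivity) (by simp [hcard.ne'])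
          (fun _ _ => Set.mem_univ _)
    _ ≤ ∑ i, 1 / (Fintype.card ι : ℝ) * (f u - δ i) :=
        Finset.sum_le_sum fun i _ => mul_le_mul_of_nonneg_left (h i) (by positivity)
    _ = f u - 1 / (Fintype.card ι : ℝ) * ∑ i, δ i := by
        simp only [mul_sub, Finset.sum_sub_distrib, ← Finset.mul_sum, Finset.sum_const,
          Finset.card_univ, nsmul_eq_mul]
        field_simp

theorem sum_smul_add_blockEmb {M : ℕ} {n : Fin M → ℕ} (hM : 0 < M) (u : FullSpace M n)
    (v : (i : Fin M) → EuclideanSpace ℝ (Fin (n i))) :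
    ∑ i, (1 / (M : ℝ)) • (u + blockEmb i (v i - u i)) =
      u + (1 / (M : ℝ)) • WithLp.toLp 2 (fun i => v i - u i) := by
  have hM' : (M : ℝ) ≠ 0 := by positivity
  rw [← Finset.smul_sum, Finset.sum_add_distrib, sum_blockEmb, Finset.sum_const,
    Finset.card_univ, Fintype.card_fin, ← Nat.cast_smul_eq_nsmul ℝ]
  match_scalars <;> field_simp

theorem pcdm_iteration_decrease_general {M : ℕ} {n : Fin M → ℕ} (hM : 0 < M)
    (f : FullSpace M n → ℝ) (hconv : ConvexOn ℝ Set.univ f)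
    (L : Fin M → ℝ) (hL : ∀ i, 0 < L i)
    (hdesc : ∀ (i : Fin M) (u : FullSpace M n) (h : EuclideanSpace ℝ (Fin (n i))),
      f (u + blockEmb i h) ≤ f u + ⟪gradient f u i, h⟫ + L i / 2 * ‖h‖ ^ 2)
    (U : (i : Fin M) → Set (EuclideanSpace ℝ (Fin (n i))))
    (hUconvex : ∀ i, Convex ℝ (U i))
    (uk : FullSpace M n) (hukU : ∀ i, uk i ∈ U i)
    (vbar : (i : Fin M) → EuclideanSpace ℝ (Fin (n i)))
    (hvbarU : ∀ i, vbar i ∈ U i)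
    (hmin : ∀ i, ∀ v ∈ U i,
      ⟪gradient f uk i, vbar i - uk i⟫ + L i / 2 * ‖vbar i - uk i‖ ^ 2 ≤
        ⟪gradient f uk i, v - uk i⟫ + L i / 2 * ‖v - uk i‖ ^ 2)
    (uk1 : FullSpace M n)
    (hupd : ∀ i, uk1 i = (1 / (M : ℝ)) • vbar i + (((M : ℝ) - 1) / (M : ℝ)) • uk i) :
    f uk1 ≤ f uk - (1 / (M : ℝ)) * ∑ i, L i / 2 * ‖vbar i - uk i‖ ^ 2 ∧
      f uk1 ≤ f uk := by
  have hblock (i : Fin M) :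
      f (uk + blockEmb i (vbar i - uk i)) ≤ f uk - L i / 2 * ‖vbar i - uk i‖ ^ 2 := by
    have := inner_add_mul_norm_sq_nonpos_of_isMinOn (hUconvex i) (hukU i) (hvbarU i) (hmin i)
    linarith [hdesc i uk (vbar i - uk i)]
  have hrep : uk1 = ∑ i, (1 / (M : ℝ)) • (uk + blockEmb i (vbar i - uk i)) := by
    have hM' : (M : ℝ) ≠ 0 := by positivity
    rw [sum_smul_add_blockEmb hM]
    ext j : 1
    rw [hupd j]
    simp only [PiLp.add_apply, PiLp.smul_apply]
    match_scalars
    · field_simp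
    · field_simp; ring
  have : Nonempty (Fin M) := Fin.pos_iff_nonempty.mp hM
  have hdecrease : f uk1 ≤ f uk - (1 / (M : ℝ)) * ∑ i, L i / 2 * ‖vbar i - uk i‖ ^ 2 := by
    simpa only [hrep, Fintype.card_fin] using hconv.map_average_le_sub hblock
  refine ⟨hdecrease, hdecrease.trans (sub_le_self _ ?_)⟩
  exact mul_nonneg (by positivity) (Finset.sum_nonneg fun i _ => by have := hL i; positivity)

/-- one PCDM iteration decreases the objective by at least the averaged
sum of the block sufficient decreases. -/
theorem pcdm_iteration_decrease {M : ℕ} {n : Fin M → ℕ} (hM : 0 < M)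
    (f : FullSpace M n → ℝ) (hconv : ConvexOn ℝ Set.univ f) (hf : Differentiable ℝ f)
    (L : Fin M → ℝ) (hL : ∀ i, 0 < L i)
    (hdesc : ∀ (i : Fin M) (u : FullSpace M n) (h : EuclideanSpace ℝ (Fin (n i))),
      f (u + blockEmb i h) ≤ f u + ⟪gradient f u i, h⟫ + L i / 2 * ‖h‖ ^ 2)
    (U : (i : Fin M) → Set (EuclideanSpace ℝ (Fin (n i))))
    (hUclosed : ∀ i, IsClosed (U i)) (hUconvex : ∀ i, Convex ℝ (U i))
    (uk : FullSpace M n) (hukU : ∀ i, uk i ∈ U i)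
    (vbar : (i : Fin M) → EuclideanSpace ℝ (Fin (n i)))
    (hvbarU : ∀ i, vbar i ∈ U i)
    (hmin : ∀ i, ∀ v ∈ U i,
      ⟪gradient f uk i, vbar i - uk i⟫ + L i / 2 * ‖vbar i - uk i‖ ^ 2 ≤
        ⟪gradient f uk i, v - uk i⟫ + L i / 2 * ‖v - uk i‖ ^ 2)
    (uk1 : FullSpace M n)
    (hupd : ∀ i, uk1 i = (1 / (M : ℝ)) • vbar i + (((M : ℝ) - 1) / (M : ℝ)) • uk i) :
    f uk1 ≤ f uk - (1 / (M : ℝ)) * ∑ i, L i / 2 * ‖vbar i - uk i‖ ^ 2 ∧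
      f uk1 ≤ f uk :=
  pcdm_iteration_decrease_general hM f hconv L hL hdesc U hUconvex uk hukU vbar hvbarU hmin uk1 hupd
end

section
/- Consider the recursion a_{k+1} + (1/M)Σ_{j=0}^{k}(f_j − f*) ≤ a₀ for a descent sequence f_k (f_{k+1} ≤ f_k and f_k ≥ f*), where a_k = (1/2)r_k² + f_k − f* ≥ f_k − f*. Then f_k − f* ≤ (M/(M+k))·a₀ for all k ≥ 0. -/
/-! Since `a k ≥ f k - f*` and the gaps `f j - f*` decrease, the recursion gives
`(1 + k / M) (f k - f*) ≤ a k + (1/M) Σ_{j<k} (f j - f*) ≤ a₀`. -/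

open Finset

lemma nat_mul_le_sum_range_of_antitone {g : ℕ → ℝ} (hg : Antitone g) (k : ℕ) :
    k * g k ≤ ∑ j ∈ range k, g j := by
  simpa using card_nsmul_le_sum (range k) g (g k) fun j hj => hg (mem_range.mp hj).le

lemma le_div_add_mul_of_add_inv_mul_sum_range_le {M A : ℝ} (hM : 0 < M) {e : ℕ → ℝ}
    (he : Antitone e) {k : ℕ} (h : e k + M⁻¹ * ∑ j ∈ range k, e j ≤ A) :
    e k ≤ M / (M + k) * A := by
  rw [div_mul_eq_mul_div, le_div_iff₀ (by positivity)]
  calc e k * (M + k) = M * (e k + M⁻¹ * (k * e k)) := by field_simp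
    _ ≤ M * (e k + M⁻¹ * ∑ j ∈ range k, e j) := by
      gcongr
      exact nat_mul_le_sum_range_of_antitone he k
    _ ≤ M * A := by gcongr

theorem pcdm_summation_lemma_general (M : ℕ) (hM : 1 ≤ M)
    (f : ℕ → ℝ) (fstar : ℝ) (hmono : ∀ k, f (k + 1) ≤ f k)
    (r : ℕ → ℝ)
    (a : ℕ → ℝ) (ha : ∀ k, a k = 1 / 2 * r k ^ 2 + f k - fstar)
    (hrec : ∀ k, a (k + 1) + (1 / (M : ℝ)) * ∑ j ∈ Finset.range (k + 1), (f j - fstar)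
      ≤ a 0) :
    ∀ k : ℕ, f k - fstar ≤ (M : ℝ) / ((M : ℝ) + (k : ℝ)) * a 0 := by
  have hgap : ∀ k, f k - fstar ≤ a k := fun k => by
    rw [ha k]
    linarith [sq_nonneg (r k)]
  have hanti : Antitone fun k => f k - fstar :=
    antitone_nat_of_succ_le fun k => sub_le_sub_right (hmono k) fstar
  intro k
  refine le_div_add_mul_of_add_inv_mul_sum_range_le (by exact_mod_cast hM) hanti ?_
  cases k with
  | zero => simpa using hgap 0
  | succ k => simpa [one_div] using (add_le_add_left (hgap (k + 1)) _).trans (hrec k)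

/-- the final summation argument of the sublinear-rate theorem, isolated
as a real-sequence lemma. -/
theorem pcdm_summation_lemma (M : ℕ) (hM : 1 ≤ M)
    (f : ℕ → ℝ) (fstar : ℝ) (hmono : ∀ k, f (k + 1) ≤ f k) (hlb : ∀ k, fstar ≤ f k)
    (r : ℕ → ℝ) (hr : ∀ k, 0 ≤ r k)
    (a : ℕ → ℝ) (ha : ∀ k, a k = 1 / 2 * r k ^ 2 + f k - fstar)
    (hrec : ∀ k, a (k + 1) + (1 / (M : ℝ)) * ∑ j ∈ Finset.range (k + 1), (f j - fstar)
      ≤ a 0) :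
    ∀ k : ℕ, f k - fstar ≤ (M : ℝ) / ((M : ℝ) + (k : ℝ)) * a 0 :=
  pcdm_summation_lemma_general M hM f fstar hmono r a ha hrec
end
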